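/- arXiv:2307.15702 — 7 statements merged into one kernel-verified Lean document; each statement's English description precedes it below -/
import Mathlib

section
/- Let A* be the set of strong arcs of a non-Eulerian vote graph. For each a ∈ A*, let x^a be a maximum circulation with x^a_a < q_a, and let x* be the average of the x^a over a ∈ A*. Then x* is a maximum circulation and the set of arcs not saturated by x* equals A*. -/
open Finset

/-- `x` is a circulation on the arc set `A` with capacities `q`. -/
def IsCirculation {V : Type*} [Fintype V] [DecidableEq V]
    (A : Finset (V × V)) (q x : V × V → ℝ) : Prop :=
  (∀ a ∈ A, 0 ≤ x a ∧ x a ≤ q a) ∧ (∀ a, a ∉ A → x a = 0) ∧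
  ∀ i : V, ∑ a ∈ A.filter (fun a => a.1 = i), x a
         = ∑ a ∈ A.filter (fun a => a.2 = i), x a

/-- `x` is a maximum circulation: it maximizes total flow. -/
def IsMaxCirculation {V : Type*} [Fintype V] [DecidableEq V]
    (A : Finset (V × V)) (q x : V × V → ℝ) : Prop :=
  IsCirculation A q x ∧
  ∀ y, IsCirculation A q y → ∑ a ∈ A, y a ≤ ∑ a ∈ A, x a

/-- The residual (remaining-votes) relation: arcs of `A` not saturated by `x`. -/
def residRel {V : Type*} [Fintype V] [DecidableEq V]
    (A : Finset (V × V)) (q x : V × V → ℝ) (i j : V) : Prop :=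
  (i, j) ∈ A ∧ x (i, j) < q (i, j)

/-- A relation is acyclic if it has no directed cycle. -/
def Acyclic {V : Type*} (r : V → V → Prop) : Prop :=
  ∀ i, ¬ Relation.TransGen r i i

/-- The set of arcs of `A` left unsaturated by `x`. -/
noncomputable def unsat {V : Type*} [Fintype V] [DecidableEq V]
    (A : Finset (V × V)) (q x : V × V → ℝ) : Finset (V × V) :=
  A.filter (fun a => x a < q a)

/-- An arc is strong if some maximum circulation leaves it unsaturated. -/
def IsStrongArc {V : Type*} [Fintype V] [DecidableEq V]
    (A : Finset (V × V)) (q : V × V → ℝ) (a : V × V) : Prop :=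
  a ∈ A ∧ ∃ x, IsMaxCirculation A q x ∧ x a < q a

/-- A strong maximum circulation: a maximum circulation leaving as many arcs
unsaturated as possible. -/
def IsStrongMaxCirculation {V : Type*} [Fintype V] [DecidableEq V]
    (A : Finset (V × V)) (q x : V × V → ℝ) : Prop :=
  IsMaxCirculation A q x ∧
  ∀ y, IsMaxCirculation A q y → (unsat A q y).card ≤ (unsat A q x).card

/-- Strong complementary slackness between a circulation `x` and node
potentials `y`. -/
def StrongCS {V : Type*} [Fintype V] [DecidableEq V]
    (A : Finset (V × V)) (q x : V × V → ℝ) (y : V → ℝ) : Prop :=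
  ∀ a ∈ A,
    (x a = 0 → 1 - y a.1 + y a.2 ≤ 0) ∧
    (0 < x a → x a < q a → 1 - y a.1 + y a.2 = 0) ∧
    (x a = q a → 0 < 1 - y a.1 + y a.2)

/-- The vote graph is Eulerian: capacity balance holds at every node. -/
def Eulerian {V : Type*} [Fintype V] [DecidableEq V]
    (A : Finset (V × V)) (q : V × V → ℝ) : Prop :=
  ∀ i : V, ∑ a ∈ A.filter (fun a => a.1 = i), q a
         = ∑ a ∈ A.filter (fun a => a.2 = i), q a

/-! The maximum circulations form a convex set, so the average of the `x^a` is one; and on each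
arc it stays below capacity exactly when some `x^a` does, that is, exactly on the strong arcs. -/

theorem sum_div_card_lt_iff_exists_lt {ι K : Type*} [Field K] [LinearOrder K]
    [IsStrictOrderedRing K] {s : Finset ι} (hs : s.Nonempty) {f : ι → K} {c : K}
    (hf : ∀ i ∈ s, f i ≤ c) : (∑ i ∈ s, f i) / s.card < c ↔ ∃ i ∈ s, f i < c := by
  have hcard : (0 : K) < s.card := by exact_mod_cast hs.card_pos
  rw [div_lt_iff₀ hcard, ← nsmul_eq_mul', ← sum_const, (sum_le_sum hf).lt_iff_ne,
    Ne, sum_eq_sum_iff_of_le hf]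
  push Not
  exact exists_congr fun i => and_congr_right fun hi => (hf i hi).lt_iff_ne.symm

section Circulation

variable {V : Type*} [Fintype V] [DecidableEq V] (A : Finset (V × V)) (q : V × V → ℝ)

theorem convex_setOf_isCirculation : Convex ℝ {x | IsCirculation A q x} := by
  rintro x ⟨hx_cap, hx_out, hx_cons⟩ y ⟨hy_cap, hy_out, hy_cons⟩ s t hs ht hst
  refine ⟨fun a ha => ⟨?_, ?_⟩, fun a ha => ?_, fun i => ?_⟩
  · have := (hx_cap a ha).1
    have := (hy_cap a ha).1
    simp only [Pi.add_apply, Pi.smul_apply, smul_eq_mul]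
    positivity
  · calc (s • x + t • y) a = s * x a + t * y a := rfl
      _ ≤ s * q a + t * q a := by gcongr <;> [exact (hx_cap a ha).2; exact (hy_cap a ha).2]
      _ = q a := by rw [← add_mul, hst, one_mul]
  · simp [hx_out a ha, hy_out a ha]
  · simp only [Pi.add_apply, Pi.smul_apply, smul_eq_mul, sum_add_distrib, ← mul_sum,
      hx_cons i, hy_cons i]

theorem convex_setOf_isMaxCirculation : Convex ℝ {x | IsMaxCirculation A q x} := by
  rintro x ⟨hx, hx_max⟩ y ⟨hy, hy_max⟩ s t hs ht hst
  refine ⟨convex_setOf_isCirculation A q hx hy hs ht hst, fun z hz => ?_⟩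
  calc ∑ a ∈ A, z a = s * ∑ a ∈ A, z a + t * ∑ a ∈ A, z a := by rw [← add_mul, hst, one_mul]
    _ ≤ s * ∑ a ∈ A, x a + t * ∑ a ∈ A, y a :=
      add_le_add (mul_le_mul_of_nonneg_left (hx_max z hz) hs)
        (mul_le_mul_of_nonneg_left (hy_max z hz) ht)
    _ = ∑ a ∈ A, (s • x + t • y) a := by
      simp only [Pi.add_apply, Pi.smul_apply, smul_eq_mul, sum_add_distrib, mul_sum]

theorem IsMaxCirculation.average {ι : Type*} {s : Finset ι} (hs : s.Nonempty)
    {x : ι → V × V → ℝ} (hx : ∀ i ∈ s, IsMaxCirculation A q (x i)) :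
    IsMaxCirculation A q (fun b => (∑ i ∈ s, x i b) / s.card) := by
  have hmem : IsMaxCirculation A q (s.centerMass (fun _ => (1 : ℝ)) x) :=
    (convex_setOf_isMaxCirculation A q).centerMass_mem (fun _ _ => zero_le_one)
      (by simpa using hs.card_pos) hx
  convert hmem using 1
  funext b
  simp [centerMass, Finset.sum_apply, div_eq_inv_mul]

theorem unsat_average {ι : Type*} {s : Finset ι} (hs : s.Nonempty) {x : ι → V × V → ℝ}
    (hx : ∀ i ∈ s, IsCirculation A q (x i)) :
    unsat A q (fun b => (∑ i ∈ s, x i b) / s.card) = s.biUnion fun i => unsat A q (x i) := by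
  ext b
  simp only [unsat, mem_filter, mem_biUnion]
  by_cases hb : b ∈ A
  · simp only [hb, true_and, sum_div_card_lt_iff_exists_lt hs fun i hi => ((hx i hi).1 b hb).2]
  · simp [hb]

end Circulation

theorem average_over_strong_arcs_general
    {V : Type*} [Fintype V] [DecidableEq V]
    (A Astar : Finset (V × V)) (q : V × V → ℝ)
    (hAstar : ∀ a, a ∈ Astar ↔ IsStrongArc A q a)
    (hne : Astar.Nonempty)
    (x : V × V → V × V → ℝ)
    (hx : ∀ a ∈ Astar, IsMaxCirculation A q (x a) ∧ x a a < q a) :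
    IsMaxCirculation A q (fun b => (∑ a ∈ Astar, x a b) / Astar.card) ∧
    unsat A q (fun b => (∑ a ∈ Astar, x a b) / Astar.card) = Astar := by
  refine ⟨IsMaxCirculation.average A q hne fun a ha => (hx a ha).1, ?_⟩
  rw [unsat_average A q hne fun a ha => (hx a ha).1.1]
  ext b
  simp only [mem_biUnion, unsat, mem_filter]
  constructor
  · rintro ⟨a, ha, hb, hlt⟩
    exact (hAstar b).2 ⟨hb, x a, (hx a ha).1, hlt⟩
  · intro hb
    exact ⟨b, hb, ((hAstar b).1 hb).1, (hx b hb).2⟩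

/-- the average of maximum circulations `x^a` (each leaving strong
arc `a` unsaturated) over the strong arcs `A*` is a maximum circulation whose
set of unsaturated arcs is exactly `A*`. -/
theorem average_over_strong_arcs
    {V : Type*} [Fintype V] [DecidableEq V]
    (A Astar : Finset (V × V)) (q : V × V → ℝ)
    (hqpos : ∀ a ∈ A, 0 < q a)
    (hAstar : ∀ a, a ∈ Astar ↔ IsStrongArc A q a)
    (hne : Astar.Nonempty)
    (x : V × V → V × V → ℝ)
    (hx : ∀ a ∈ Astar, IsMaxCirculation A q (x a) ∧ x a a < q a) :
    IsMaxCirculation A q (fun b => (∑ a ∈ Astar, x a b) / Astar.card) ∧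
    unsat A q (fun b => (∑ a ∈ Astar, x a b) / Astar.card) = Astar :=
  average_over_strong_arcs_general A Astar q hAstar hne x hx
end

section
/- Every strong maximum circulation leaves exactly the strong arcs unsaturated: if x' is a maximum circulation maximizing the number of unsaturated arcs, then {a : x'_a < q_a} = A*, the set of strong arcs. Conversely, any maximum circulation x' with {a : x'_a < q_a} = A* is a strong maximum circulation. -/
/-! Maximum circulations form a convex set, so averaging one maximum circulation per strong arc
gives a maximum circulation that leaves every strong arc unsaturated. Its unsaturated set contains
`A*`, while every maximum circulation leaves only strong arcs unsaturated; hence a maximum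
circulation is strong exactly when its unsaturated set is all of `A*`. -/

open Finset

section
variable {V : Type*} [Fintype V] [DecidableEq V] (A : Finset (V × V)) (q : V × V → ℝ)

/-- The set `A*` of strong arcs. -/
noncomputable def strongArcs : Finset (V × V) := by
  classical exact A.filter (IsStrongArc A q)

variable {A q}

theorem mem_strongArcs {a : V × V} : a ∈ strongArcs A q ↔ IsStrongArc A q a := by
  classical
  simp only [strongArcs, mem_filter]
  exact ⟨And.right, fun h => ⟨h.1, h⟩⟩

theorem coe_strongArcs : (↑(strongArcs A q) : Set (V × V)) = {a | IsStrongArc A q a} :=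
  Set.ext fun _ => mem_strongArcs

theorem IsMaxCirculation.unsat_subset_strongArcs {x : V × V → ℝ} (hx : IsMaxCirculation A q x) :
    unsat A q x ⊆ strongArcs A q := fun a ha => by
  obtain ⟨haA, hlt⟩ := mem_filter.1 ha
  exact mem_strongArcs.2 ⟨haA, x, hx, hlt⟩

theorem IsMaxCirculation.exists_strongArcs_subset_unsat {x : V × V → ℝ}
    (hx : IsMaxCirculation A q x) :
    ∃ z, IsMaxCirculation A q z ∧ strongArcs A q ⊆ unsat A q z := by
  set S := strongArcs A q
  rcases S.eq_empty_or_nonempty with hS | hS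
  · exact ⟨x, hx, by simp [S, hS]⟩
  choose! w hw hwlt using fun a (ha : a ∈ S) => (mem_strongArcs.1 ha).2
  have hc : (0 : ℝ) < (#S : ℝ)⁻¹ := inv_pos.2 (by exact_mod_cast hS.card_pos)
  have hweights : ∑ _a ∈ S, (#S : ℝ)⁻¹ = 1 := by
    rw [sum_const, nsmul_eq_mul, mul_inv_cancel₀ (by exact_mod_cast hS.card_pos.ne')]
  refine ⟨∑ a ∈ S, (#S : ℝ)⁻¹ • w a,
    (convex_setOf_isMaxCirculation A q).sum_mem (fun _ _ => hc.le) hweights hw,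
    fun b hb => mem_filter.2 ⟨(mem_strongArcs.1 hb).1, ?_⟩⟩
  calc (∑ a ∈ S, (#S : ℝ)⁻¹ • w a) b = ∑ a ∈ S, (#S : ℝ)⁻¹ * w a b := by
        simp only [Finset.sum_apply, Pi.smul_apply, smul_eq_mul]
    _ < ∑ _a ∈ S, (#S : ℝ)⁻¹ * q b :=
        sum_lt_sum (fun a ha => mul_le_mul_of_nonneg_left
            (((hw a ha).1.1 b (mem_strongArcs.1 hb).1).2) hc.le)
          ⟨b, hb, mul_lt_mul_of_pos_left (hwlt b hb) hc⟩
    _ = q b := by rw [← sum_mul, hweights, one_mul]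

end

theorem strong_max_circulation_iff_unsat_eq_strong_general
    {V : Type*} [Fintype V] [DecidableEq V]
    (A : Finset (V × V)) (q : V × V → ℝ)
    (x' : V × V → ℝ) :
    (IsStrongMaxCirculation A q x' →
      (↑(unsat A q x') : Set (V × V)) = {a | IsStrongArc A q a}) ∧
    ((IsMaxCirculation A q x' ∧
        (↑(unsat A q x') : Set (V × V)) = {a | IsStrongArc A q a}) →
      IsStrongMaxCirculation A q x') := by
  rw [← coe_strongArcs, coe_inj]
  refine ⟨fun ⟨hx, hmost⟩ => ?_, fun ⟨hx, hunsat⟩ => ⟨hx, fun y hy => ?_⟩⟩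
  · obtain ⟨z, hz, hsub⟩ := hx.exists_strongArcs_subset_unsat
    exact eq_of_subset_of_card_le hx.unsat_subset_strongArcs
      ((card_le_card hsub).trans (hmost z hz))
  · exact card_le_card (hunsat ▸ hy.unsat_subset_strongArcs)

/-- a maximum circulation is strong iff its unsaturated arc set is
exactly the set of strong arcs. -/
theorem strong_max_circulation_iff_unsat_eq_strong
    {V : Type*} [Fintype V] [DecidableEq V]
    (A : Finset (V × V)) (q : V × V → ℝ)
    (hqpos : ∀ a ∈ A, 0 < q a) (x' : V × V → ℝ) :
    (IsStrongMaxCirculation A q x' →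
      (↑(unsat A q x') : Set (V × V)) = {a | IsStrongArc A q a}) ∧
    ((IsMaxCirculation A q x' ∧
        (↑(unsat A q x') : Set (V × V)) = {a | IsStrongArc A q a}) →
      IsStrongMaxCirculation A q x') :=
  strong_max_circulation_iff_unsat_eq_strong_general A q x'
end

section
/- Any strictly positive convex combination of the maximum circulations x^a (a ∈ A*), where x^a is a maximum circulation leaving arc a unsaturated, is a strong maximum circulation. -/
/-! Every arc left unsaturated by some maximum circulation is strong, so it suffices that the
combination `z` is a maximum circulation leaving every strong arc unsaturated. Maximum
circulations form a convex set, and `z a < q a` because `x^a a < q a` enters with weight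
`λ_a > 0`. -/

open Finset

lemma sum_sum_mul_comm {α ι : Type*} (S : Finset α) (s : Finset ι) (w : ι → ℝ)
    (x : ι → α → ℝ) :
    ∑ b ∈ S, ∑ i ∈ s, w i * x i b = ∑ i ∈ s, w i * ∑ b ∈ S, x i b := by
  rw [Finset.sum_comm]
  simp only [Finset.mul_sum]

section ConvexCombination

variable {V ι : Type*} [Fintype V] [DecidableEq V] {A : Finset (V × V)} {q : V × V → ℝ}
  {s : Finset ι} {w : ι → ℝ} {x : ι → V × V → ℝ}

lemma IsCirculation.convexCombination (hw : ∀ i ∈ s, 0 ≤ w i) (hw1 : ∑ i ∈ s, w i = 1)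
    (hx : ∀ i ∈ s, IsCirculation A q (x i)) :
    IsCirculation A q (fun b => ∑ i ∈ s, w i * x i b) := by
  refine ⟨fun b hb => ⟨?_, ?_⟩, fun b hb => ?_, fun v => ?_⟩
  · exact Finset.sum_nonneg fun i hi => mul_nonneg (hw i hi) ((hx i hi).1 b hb).1
  · calc ∑ i ∈ s, w i * x i b ≤ ∑ i ∈ s, w i * q b :=
          Finset.sum_le_sum fun i hi => mul_le_mul_of_nonneg_left ((hx i hi).1 b hb).2 (hw i hi)
      _ = q b := by rw [← Finset.sum_mul, hw1, one_mul]
  · exact Finset.sum_eq_zero fun i hi => by rw [(hx i hi).2.1 b hb, mul_zero]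
  · simp only [sum_sum_mul_comm]
    exact Finset.sum_congr rfl fun i hi => by rw [(hx i hi).2.2 v]

lemma IsMaxCirculation.convexCombination (hw : ∀ i ∈ s, 0 ≤ w i) (hw1 : ∑ i ∈ s, w i = 1)
    (hx : ∀ i ∈ s, IsMaxCirculation A q (x i)) :
    IsMaxCirculation A q (fun b => ∑ i ∈ s, w i * x i b) := by
  refine ⟨IsCirculation.convexCombination hw hw1 fun i hi => (hx i hi).1, fun y hy => ?_⟩
  calc ∑ b ∈ A, y b = ∑ i ∈ s, w i * ∑ b ∈ A, y b := by rw [← Finset.sum_mul, hw1, one_mul]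
    _ ≤ ∑ i ∈ s, w i * ∑ b ∈ A, x i b :=
        Finset.sum_le_sum fun i hi => mul_le_mul_of_nonneg_left ((hx i hi).2 y hy) (hw i hi)
    _ = ∑ b ∈ A, ∑ i ∈ s, w i * x i b := (sum_sum_mul_comm A s w x).symm

lemma mem_unsat_convexCombination (hw : ∀ i ∈ s, 0 ≤ w i) (hw1 : ∑ i ∈ s, w i = 1)
    (hx : ∀ i ∈ s, IsCirculation A q (x i)) {a : V × V} (ha : a ∈ A) {j : ι} (hj : j ∈ s)
    (hwj : 0 < w j) (hxj : x j a < q a) :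
    a ∈ unsat A q (fun b => ∑ i ∈ s, w i * x i b) := by
  refine Finset.mem_filter.2 ⟨ha, ?_⟩
  calc ∑ i ∈ s, w i * x i a < ∑ i ∈ s, w i * q a :=
        Finset.sum_lt_sum (fun i hi => mul_le_mul_of_nonneg_left ((hx i hi).1 a ha).2 (hw i hi))
          ⟨j, hj, mul_lt_mul_of_pos_left hxj hwj⟩
    _ = q a := by rw [← Finset.sum_mul, hw1, one_mul]

end ConvexCombination

lemma IsStrongArc.of_mem_unsat {V : Type*} [Fintype V] [DecidableEq V] {A : Finset (V × V)}
    {q y : V × V → ℝ} (hy : IsMaxCirculation A q y) {a : V × V} (ha : a ∈ unsat A q y) :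
    IsStrongArc A q a :=
  let ⟨haA, hya⟩ := Finset.mem_filter.1 ha
  ⟨haA, y, hy, hya⟩

theorem strictly_positive_combination_is_strong_general
    {V : Type*} [Fintype V] [DecidableEq V]
    (A Astar : Finset (V × V)) (q : V × V → ℝ)
    (hAstar : ∀ a, a ∈ Astar ↔ IsStrongArc A q a)
    (x : V × V → V × V → ℝ)
    (hx : ∀ a ∈ Astar, IsMaxCirculation A q (x a) ∧ x a a < q a)
    (lam : V × V → ℝ)
    (hlampos : ∀ a ∈ Astar, 0 < lam a) (hlam1 : ∑ a ∈ Astar, lam a = 1) :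
    IsStrongMaxCirculation A q (fun b => ∑ a ∈ Astar, lam a * x a b) := by
  have hlam : ∀ a ∈ Astar, 0 ≤ lam a := fun a ha => (hlampos a ha).le
  refine ⟨IsMaxCirculation.convexCombination hlam hlam1 fun a ha => (hx a ha).1,
    fun y hy => Finset.card_le_card fun b hb => ?_⟩
  have hbstar : b ∈ Astar := (hAstar b).2 (IsStrongArc.of_mem_unsat hy hb)
  exact mem_unsat_convexCombination hlam hlam1 (fun a ha => (hx a ha).1.1)
    ((hAstar b).1 hbstar).1 hbstar (hlampos b hbstar) (hx b hbstar).2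

/-- a strictly positive convex combination of the maximum
circulations `x^a` (each leaving strong arc `a` unsaturated) is a strong
maximum circulation. -/
theorem strictly_positive_combination_is_strong
    {V : Type*} [Fintype V] [DecidableEq V]
    (A Astar : Finset (V × V)) (q : V × V → ℝ)
    (hqpos : ∀ a ∈ A, 0 < q a)
    (hAstar : ∀ a, a ∈ Astar ↔ IsStrongArc A q a)
    (hne : Astar.Nonempty)
    (x : V × V → V × V → ℝ)
    (hx : ∀ a ∈ Astar, IsMaxCirculation A q (x a) ∧ x a a < q a)
    (lam : V × V → ℝ)
    (hlampos : ∀ a ∈ Astar, 0 < lam a) (hlam1 : ∑ a ∈ Astar, lam a = 1) :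
    IsStrongMaxCirculation A q (fun b => ∑ a ∈ Astar, lam a * x a b) :=
  strictly_positive_combination_is_strong_general A Astar q hAstar x hx lam hlampos hlam1
end

section
/- Minimizing ∑_{(i,j)∈A} q_ij · max{y_j − y_i + 1, 0} over real node potentials y equals the maximum of ∑ x_ij over circulations x with 0 ≤ x ≤ q (LP duality between the relaxed Kemeny objective and maximum circulation). -/
open Finset

/-!
Weak duality is the inequality `x_a t ≤ q_a max(t, 0)` summed over the arcs, since
`∑ x_a (y_j - y_i) = 0` for a circulation. Conversely, take a maximum circulation `x` (it exists by
compactness). Pushing a little flow around a closed walk of the residual graph of `x` keeps a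
circulation and changes its value by minus the cost of the walk (`-1` per forward step, `+1` per
backward step), so maximality rules out negative residual cycles. Bellman–Ford then yields
potentials `y` with `y_v ≤ y_u + cost(u, v)` along residual steps, which is complementary
slackness: `y_j - y_i + 1 ≤ 0` on unsaturated arcs and `≥ 0` on arcs carrying flow. Hence
`∑ q_a max(y_j - y_i + 1, 0) = ∑ x_a`.
-/

open Filter Topology

/-- A walk is encoded by the list of vertices it visits; this sums `f` over its steps. -/
def walkSum {V M : Type*} [AddMonoid M] (f : V → V → M) : List V → M
  | u :: v :: l => f u v + walkSum f (v :: l)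
  | _ => 0

section walkSum

variable {V M : Type*}

theorem walkSum_append_cons [AddMonoid M] (f : V → V → M) :
    ∀ (l₁ : List V) (b : V) (l₂ : List V),
      walkSum f (l₁ ++ b :: l₂) = walkSum f (l₁ ++ [b]) + walkSum f (b :: l₂)
  | [], _, _ => by simp [walkSum]
  | [_], _, _ => by simp [walkSum]
  | u :: v :: l₁, b, l₂ => by
    have ih := walkSum_append_cons f (v :: l₁) b l₂
    simp only [List.cons_append, walkSum] at ih ⊢
    rw [ih, add_assoc]

theorem walkSum_append_pair [AddMonoid M] (f : V → V → M) (l : List V) (u v : V) :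
    walkSum f (l ++ [u] ++ [v]) = walkSum f (l ++ [u]) + f u v := by
  rw [List.append_assoc, List.singleton_append, walkSum_append_cons]
  simp [walkSum]

theorem map_walkSum [AddMonoid M] {N F : Type*} [AddMonoid N] [FunLike F M N]
    [AddMonoidHomClass F M N] (g : F) (f : V → V → M) :
    ∀ l : List V, g (walkSum f l) = walkSum (fun u v => g (f u v)) l
  | u :: v :: l => by simp only [walkSum, map_add, map_walkSum g f (v :: l)]
  | [] | [_] => by simp [walkSum]

theorem walkSum_apply {ι : Type*} [AddMonoid M] (f : V → V → ι → M) (l : List V) (b : ι) :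
    walkSum f l b = walkSum (fun u v => f u v b) l :=
  map_walkSum (Pi.evalAddMonoidHom (fun _ => M) b) f l

theorem sum_walkSum_apply {ι : Type*} [AddCommMonoid M] (s : Finset ι) (f : V → V → ι → M)
    (l : List V) : ∑ b ∈ s, walkSum f l b = walkSum (fun u v => ∑ b ∈ s, f u v b) l := by
  simpa using map_walkSum (∑ b ∈ s, Pi.evalAddMonoidHom (fun _ => M) b) f l

theorem walkSum_neg [AddCommGroup M] (f : V → V → M) (l : List V) :
    walkSum (fun u v => -f u v) l = -walkSum f l :=
  (map_walkSum (negAddMonoidHom : M →+ M) f l).symm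

theorem walkSum_le_walkSum [AddCommMonoid M] [PartialOrder M] [IsOrderedAddMonoid M]
    {r : V → V → Prop} {f g : V → V → M} (hfg : ∀ u v, r u v → f u v ≤ g u v) :
    ∀ {l : List V}, l.IsChain r → walkSum f l ≤ walkSum g l
  | u :: v :: l, h => by
    rw [List.isChain_cons_cons] at h
    exact add_le_add (hfg u v h.1) (walkSum_le_walkSum hfg h.2)
  | [], _ | [_], _ => le_rfl

theorem walkSum_congr [AddMonoid M] {r : V → V → Prop} {f g : V → V → M}
    (hfg : ∀ u v, r u v → f u v = g u v) : ∀ {l : List V}, l.IsChain r → walkSum f l = walkSum g l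
  | u :: v :: l, h => by
    rw [List.isChain_cons_cons] at h
    simp only [walkSum, hfg u v h.1, walkSum_congr hfg h.2]
  | [], _ | [_], _ => rfl

theorem walkSum_zero [AddMonoid M] : ∀ l : List V, walkSum (fun _ _ => (0 : M)) l = 0
  | u :: v :: l => by simp only [walkSum, walkSum_zero (v :: l), add_zero]
  | [] | [_] => rfl

theorem walkSum_sub_telescope [AddGroup M] (g : V → M) :
    ∀ (a b : V) (l : List V), walkSum (fun u v => g u - g v) (a :: (l ++ [b])) = g a - g b
  | a, b, [] => by simp [walkSum]
  | a, b, v :: l => by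
    simp only [List.cons_append, walkSum] at *
    rw [walkSum_sub_telescope g v b l, sub_add_sub_cancel]

end walkSum

/-- Bellman–Ford: `y i` is the least cost of a simple `r`-path ending at `i`. -/
theorem exists_potential_of_cycle_nonneg {V : Type*} [Fintype V] (r : V → V → Prop)
    (c : V → V → ℝ)
    (hcyc : ∀ (a : V) (l : List V), (a :: l).Nodup → (a :: (l ++ [a])).IsChain r →
      0 ≤ walkSum c (a :: (l ++ [a]))) :
    ∃ y : V → ℝ, ∀ i j, r i j → y j ≤ y i + c i j := by
  classical
  let paths (i : V) : Finset {l : List V // l.Nodup} :=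
    {l | (l.1 ++ [i]).Nodup ∧ (l.1 ++ [i]).IsChain r}
  have mem_paths {i : V} {l : List V} (hnd : (l ++ [i]).Nodup) (hl : (l ++ [i]).IsChain r) :
      ⟨l, hnd.sublist (List.sublist_append_left l [i])⟩ ∈ paths i := by
    simp [paths, hnd, hl]
  have hpaths (i : V) : (paths i).Nonempty := ⟨_, mem_paths (l := []) (by simp) (by simp)⟩
  refine ⟨fun i => (paths i).inf' (hpaths i) (fun l => walkSum c (l.1 ++ [i])), fun i j hij => ?_⟩
  obtain ⟨l, hl, hmin⟩ := exists_mem_eq_inf' (hpaths i) (fun l => walkSum c (l.1 ++ [i]))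
  simp only [paths, mem_filter, mem_univ, true_and] at hl
  dsimp only
  rw [hmin, ← walkSum_append_pair]
  have hchain : (l.1 ++ [i] ++ [j]).IsChain r :=
    hl.2.append (List.isChain_singleton j) (by simpa using hij)
  by_cases hj : j ∈ l.1 ++ [i]
  · obtain ⟨p, s, hps⟩ := List.append_of_mem hj
    have hsplit : l.1 ++ [i] ++ [j] = p ++ j :: (s ++ [j]) := by simp [hps]
    rw [hps] at hl
    rw [hsplit] at hchain ⊢
    have hprefix := hl
    rw [List.append_cons] at hprefix
    calc _ ≤ walkSum c (p ++ [j]) :=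
          inf'_le _ (mem_paths hprefix.1.of_append_left hprefix.2.left_of_append)
      _ ≤ walkSum c (p ++ [j]) + walkSum c (j :: (s ++ [j])) :=
          le_add_of_nonneg_right (hcyc j s hl.1.of_append_right hchain.right_of_append)
      _ = walkSum c (p ++ j :: (s ++ [j])) := (walkSum_append_cons c p j _).symm
  · have hnd : (l.1 ++ [i] ++ [j]).Nodup := hl.1.append (List.nodup_singleton j) (by simpa using hj)
    exact inf'_le _ (mem_paths hnd hchain)

theorem sum_mul_comp_eq_sum_fiberwise {ι V : Type*} [Fintype V] [DecidableEq V]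
    (s : Finset ι) (g : ι → V) (x : ι → ℝ) (y : V → ℝ) :
    ∑ a ∈ s, x a * y (g a) = ∑ i, (∑ a ∈ s with g a = i, x a) * y i := by
  rw [← sum_fiberwise s g]
  refine sum_congr rfl fun i _ => ?_
  rw [sum_mul]
  exact sum_congr rfl fun a ha => by rw [(mem_filter.1 ha).2]

theorem eventually_nonneg_add_mul {x d : ℝ} (hx : 0 ≤ x) (hd : x = 0 → 0 ≤ d) :
    ∀ᶠ ε in 𝓝[>] (0 : ℝ), 0 ≤ x + ε * d := by
  rcases hx.eq_or_lt with rfl | hpos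
  · filter_upwards [self_mem_nhdsWithin] with ε hε
    simpa using mul_nonneg (le_of_lt hε) (hd rfl)
  · have hlim : Tendsto (fun ε : ℝ => x + ε * d) (𝓝[>] 0) (𝓝 x) :=
      ((continuous_const.add (continuous_id.mul continuous_const)).tendsto' 0 x
        (by simp)).mono_left nhdsWithin_le_nhds
    exact (hlim.eventually (lt_mem_nhds hpos)).mono fun _ => le_of_lt

section Circulation

variable {V : Type*} [DecidableEq V] {A : Finset (V × V)} {q x : V × V → ℝ}

def netOutflow (A : Finset (V × V)) (i : V) : (V × V → ℝ) →ₗ[ℝ] ℝ :=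
  ∑ a ∈ A with a.1 = i, LinearMap.proj a - ∑ a ∈ A with a.2 = i, LinearMap.proj a

theorem netOutflow_apply (i : V) (f : V × V → ℝ) :
    netOutflow A i f = ∑ a ∈ A with a.1 = i, f a - ∑ a ∈ A with a.2 = i, f a := by
  simp [netOutflow]

theorem netOutflow_single {u v : V} (huv : (u, v) ∈ A) (i : V) :
    netOutflow A i (Pi.single (u, v) 1) = (if u = i then 1 else 0) - (if v = i then 1 else 0) := by
  simp [netOutflow_apply, Pi.single_apply, huv]

variable [Fintype V]

theorem isCirculation_iff :
    IsCirculation A q x ↔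
      (∀ a ∈ A, 0 ≤ x a ∧ x a ≤ q a) ∧ (∀ a, a ∉ A → x a = 0) ∧ ∀ i, netOutflow A i x = 0 := by
  simp only [IsCirculation, netOutflow_apply, sub_eq_zero]

theorem IsCirculation.sum_mul_sub_eq_zero (hx : IsCirculation A q x) (y : V → ℝ) :
    ∑ a ∈ A, x a * (y a.2 - y a.1) = 0 := by
  simp only [mul_sub, sum_sub_distrib, sum_mul_comp_eq_sum_fiberwise A Prod.snd,
    sum_mul_comp_eq_sum_fiberwise A Prod.fst, hx.2.2, sub_self]

end Circulation

section Residual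

variable {V : Type*} [Fintype V] [DecidableEq V] {A : Finset (V × V)} {q x : V × V → ℝ}

def IsResidualStep (A : Finset (V × V)) (q x : V × V → ℝ) (u v : V) : Prop :=
  residRel A q x u v ∨ ((v, u) ∈ A ∧ 0 < x (v, u))

open Classical in
noncomputable def residualStepFlow (A : Finset (V × V)) (q x : V × V → ℝ) (u v : V) :
    V × V → ℝ :=
  if residRel A q x u v then Pi.single (u, v) 1 else -Pi.single (v, u) 1

open Classical in
/-- Minus the change in flow value caused by `residualStepFlow`. -/
noncomputable def residualCost (A : Finset (V × V)) (q x : V × V → ℝ) (u v : V) : ℝ :=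
  if residRel A q x u v then -1 else 1

theorem residualCost_of_residRel {u v : V} (h : residRel A q x u v) :
    residualCost A q x u v = -1 := by
  simp [residualCost, h]

theorem residualCost_le_one (u v : V) : residualCost A q x u v ≤ 1 := by
  unfold residualCost; split_ifs <;> norm_num

theorem residualStepFlow_apply_of_notMem {u v : V} (huv : IsResidualStep A q x u v)
    {b : V × V} (hb : b ∉ A) : residualStepFlow A q x u v b = 0 := by
  by_cases h : residRel A q x u v
  · rw [residualStepFlow, if_pos h, Pi.single_eq_of_ne (by rintro rfl; exact hb h.1)]
  · rw [residualStepFlow, if_neg h, Pi.neg_apply,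
      Pi.single_eq_of_ne (by rintro rfl; exact hb (huv.resolve_left h).1), neg_zero]

theorem residualStepFlow_apply_nonpos {u v : V} {b : V × V} (hb : x b = q b) :
    residualStepFlow A q x u v b ≤ 0 := by
  by_cases h : residRel A q x u v
  · rw [residualStepFlow, if_pos h, Pi.single_eq_of_ne (by rintro rfl; exact h.2.ne hb)]
  · rw [residualStepFlow, if_neg h, Pi.neg_apply, neg_nonpos, Pi.single_apply]
    split_ifs <;> norm_num

theorem residualStepFlow_apply_nonneg {u v : V} (huv : IsResidualStep A q x u v)
    {b : V × V} (hb : x b = 0) : 0 ≤ residualStepFlow A q x u v b := by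
  by_cases h : residRel A q x u v
  · rw [residualStepFlow, if_pos h, Pi.single_apply]
    split_ifs <;> norm_num
  · rw [residualStepFlow, if_neg h, Pi.neg_apply,
      Pi.single_eq_of_ne (by rintro rfl; exact (huv.resolve_left h).2.ne' hb), neg_zero]

theorem sum_residualStepFlow {u v : V} (huv : IsResidualStep A q x u v) :
    ∑ b ∈ A, residualStepFlow A q x u v b = -residualCost A q x u v := by
  by_cases h : residRel A q x u v
  · simp [residualStepFlow, residualCost, h, h.1]
  · simp [residualStepFlow, residualCost, h, (huv.resolve_left h).1]

theorem netOutflow_residualStepFlow {u v : V} (huv : IsResidualStep A q x u v) (i : V) :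
    netOutflow A i (residualStepFlow A q x u v)
      = (if u = i then 1 else 0) - (if v = i then 1 else 0) := by
  by_cases h : residRel A q x u v
  · rw [residualStepFlow, if_pos h, netOutflow_single h.1]
  · rw [residualStepFlow, if_neg h, map_neg, netOutflow_single (huv.resolve_left h).1, neg_sub]

end Residual

section Augmentation

variable {V : Type*} [Fintype V] [DecidableEq V] {A : Finset (V × V)} {q x : V × V → ℝ}
  {a : V} {l : List V}

theorem IsCirculation.exists_isCirculation_add_smul (hx : IsCirculation A q x)
    (hw : (a :: (l ++ [a])).IsChain (IsResidualStep A q x)) :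
    ∃ ε > (0 : ℝ),
      IsCirculation A q (x + ε • walkSum (residualStepFlow A q x) (a :: (l ++ [a]))) := by
  set f := walkSum (residualStepFlow A q x) (a :: (l ++ [a]))
  obtain ⟨hcap, hoff, hcons⟩ := isCirculation_iff.1 hx
  have hfeasible : ∀ᶠ ε in 𝓝[>] (0 : ℝ), ∀ b ∈ A, 0 ≤ x b + ε * f b ∧ x b + ε * f b ≤ q b := by
    rw [eventually_all_finset]
    intro b hb
    obtain ⟨h0, hq⟩ := hcap b hb
    have hlow := eventually_nonneg_add_mul (d := f b) h0 fun hb0 => by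
      simpa [walkSum_zero, f, walkSum_apply] using
        walkSum_le_walkSum (fun u v huv => residualStepFlow_apply_nonneg huv hb0) hw
    have hup := eventually_nonneg_add_mul (d := -f b) (sub_nonneg.2 hq) fun hbq => by
      simpa [walkSum_zero, f, walkSum_apply] using
        walkSum_le_walkSum (fun u v _ => residualStepFlow_apply_nonpos (sub_eq_zero.1 hbq).symm) hw
    filter_upwards [hlow, hup] with ε h1 h2
    constructor <;> linarith
  have hoff' (b : V × V) (hb : b ∉ A) : f b = 0 := by
    simpa [walkSum_zero, f, walkSum_apply] using
      walkSum_congr (fun u v huv => residualStepFlow_apply_of_notMem huv hb) hw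
  have hcons' (i : V) : netOutflow A i f = 0 := by
    rw [map_walkSum, walkSum_congr (fun u v huv => netOutflow_residualStepFlow huv i) hw,
      walkSum_sub_telescope, sub_self]
  obtain ⟨ε, hε, hεpos⟩ := (hfeasible.and self_mem_nhdsWithin).exists
  refine ⟨ε, hεpos, isCirculation_iff.2 ⟨fun b hb => by simpa using hε b hb, fun b hb => ?_,
    fun i => ?_⟩⟩
  · simp [hoff b hb, hoff' b hb]
  · simp [hcons i, hcons' i]

theorem sum_add_smul_walkSum_residualStepFlow
    (hw : (a :: (l ++ [a])).IsChain (IsResidualStep A q x)) (ε : ℝ) :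
    ∑ b ∈ A, (x + ε • walkSum (residualStepFlow A q x) (a :: (l ++ [a]))) b
      = ∑ b ∈ A, x b - ε * walkSum (residualCost A q x) (a :: (l ++ [a])) := by
  simp only [Pi.add_apply, Pi.smul_apply, smul_eq_mul, sum_add_distrib, ← mul_sum,
    sum_walkSum_apply, walkSum_congr (fun u v huv => sum_residualStepFlow huv) hw, walkSum_neg,
    mul_neg, sub_eq_add_neg]

end Augmentation

section Duality

variable {V : Type*} [Fintype V] [DecidableEq V] {A : Finset (V × V)} {q x : V × V → ℝ}

theorem IsMaxCirculation.walkSum_residualCost_nonneg (hx : IsMaxCirculation A q x) {a : V}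
    {l : List V} (hw : (a :: (l ++ [a])).IsChain (IsResidualStep A q x)) :
    0 ≤ walkSum (residualCost A q x) (a :: (l ++ [a])) := by
  obtain ⟨ε, hε, hcirc⟩ := hx.1.exists_isCirculation_add_smul hw
  have hle := hx.2 _ hcirc
  rw [sum_add_smul_walkSum_residualStepFlow hw] at hle
  exact (mul_nonneg_iff_of_pos_left hε).1 (by linarith)

theorem IsMaxCirculation.exists_potential (hx : IsMaxCirculation A q x) :
    ∃ y : V → ℝ, ∀ u v, IsResidualStep A q x u v → y v ≤ y u + residualCost A q x u v :=
  exists_potential_of_cycle_nonneg _ _ fun _ _ _ hw => hx.walkSum_residualCost_nonneg hw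

theorem IsCirculation.sum_eq_sum_mul (hx : IsCirculation A q x) (y : V → ℝ) :
    ∑ a ∈ A, x a = ∑ a ∈ A, x a * (y a.2 - y a.1 + 1) := by
  simp only [mul_add, mul_one, sum_add_distrib, hx.sum_mul_sub_eq_zero, zero_add]

theorem IsCirculation.sum_le_sum_mul_max (hx : IsCirculation A q x) (y : V → ℝ) :
    ∑ a ∈ A, x a ≤ ∑ a ∈ A, q a * max (y a.2 - y a.1 + 1) 0 := by
  rw [hx.sum_eq_sum_mul y]
  refine sum_le_sum fun a ha => ?_
  obtain ⟨hx0, hxq⟩ := hx.1 a ha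
  calc x a * (y a.2 - y a.1 + 1) ≤ x a * max (y a.2 - y a.1 + 1) 0 :=
        mul_le_mul_of_nonneg_left (le_max_left _ _) hx0
    _ ≤ q a * max (y a.2 - y a.1 + 1) 0 := mul_le_mul_of_nonneg_right hxq (le_max_right _ _)

theorem mul_eq_mul_max_of_slack {x q t : ℝ} (hx : 0 ≤ x) (hxq : x ≤ q) (hlt : x < q → t ≤ 0)
    (hpos : 0 < x → 0 ≤ t) : x * t = q * max t 0 := by
  rcases hxq.lt_or_eq with hxq | rfl
  · rw [max_eq_right (hlt hxq), mul_zero]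
    rcases hx.lt_or_eq with hx | rfl
    · rw [le_antisymm (hlt hxq) (hpos hx), mul_zero]
    · rw [zero_mul]
  · rcases hx.lt_or_eq with hx | rfl
    · rw [max_eq_left (hpos hx)]
    · rw [zero_mul, zero_mul]

theorem IsMaxCirculation.exists_sum_mul_max_eq (hx : IsMaxCirculation A q x) :
    ∃ y : V → ℝ, ∑ a ∈ A, q a * max (y a.2 - y a.1 + 1) 0 = ∑ a ∈ A, x a := by
  obtain ⟨y, hy⟩ := hx.exists_potential
  refine ⟨y, ?_⟩
  rw [hx.1.sum_eq_sum_mul y]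
  refine sum_congr rfl fun a ha => (mul_eq_mul_max_of_slack (hx.1.1 a ha).1 (hx.1.1 a ha).2
    (fun hlt => ?_) (fun hpos => ?_)).symm
  · have := hy a.1 a.2 (Or.inl ⟨ha, hlt⟩)
    rw [residualCost_of_residRel ⟨ha, hlt⟩] at this
    linarith
  · have := (hy a.2 a.1 (Or.inr ⟨ha, hpos⟩)).trans (add_le_add_right (residualCost_le_one _ _) _)
    linarith

theorem isClosed_setOf_isCirculation (A : Finset (V × V)) (q : V × V → ℝ) :
    IsClosed {x | IsCirculation A q x} := by
  simp only [IsCirculation, Set.ofPred_and, Set.ofPred_forall]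
  refine .inter (isClosed_biInter fun a _ => .inter ?_ ?_) (.inter ?_ (isClosed_iInter fun i => ?_))
  · exact isClosed_le continuous_const (continuous_apply a)
  · exact isClosed_le (continuous_apply a) continuous_const
  · exact isClosed_iInter fun a => isClosed_iInter fun _ =>
      isClosed_eq (continuous_apply a) continuous_const
  · exact isClosed_eq (continuous_finsetSum _ fun a _ => continuous_apply a)
      (continuous_finsetSum _ fun a _ => continuous_apply a)

theorem exists_isMaxCirculation (hq : ∀ a ∈ A, 0 ≤ q a) : ∃ x, IsMaxCirculation A q x := by
  have hzero : IsCirculation A q 0 := ⟨fun a ha => ⟨le_rfl, hq a ha⟩, fun _ _ => rfl, by simp⟩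
  have hbdd : {x | IsCirculation A q x} ⊆ Set.Icc 0 fun a => max (q a) 0 := by
    intro x hx
    refine ⟨fun a => ?_, fun a => ?_⟩ <;> by_cases ha : a ∈ A
    · exact (hx.1 a ha).1
    · exact (hx.2.1 a ha).ge
    · exact (hx.1 a ha).2.trans (le_max_left _ _)
    · exact (hx.2.1 a ha).trans_le (le_max_right _ _)
  obtain ⟨x, hx, hmax⟩ := (isCompact_Icc.of_isClosed_subset (isClosed_setOf_isCirculation A q)
    hbdd).exists_isMaxOn ⟨0, hzero⟩
    (continuous_finsetSum A fun a _ => continuous_apply a).continuousOn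
  exact ⟨x, hx, fun z hz => hmax hz⟩

end Duality

/-- LP duality between the relaxed Kemeny (agony) objective and
the maximum circulation value. -/
theorem relax_kemeny_duality
    {V : Type*} [Fintype V] [DecidableEq V]
    (A : Finset (V × V)) (q : V × V → ℝ)
    (hq : ∀ a ∈ A, 0 ≤ q a) :
    sInf {s : ℝ | ∃ y : V → ℝ,
        s = ∑ a ∈ A, q a * max (y a.2 - y a.1 + 1) 0}
      = sSup {s : ℝ | ∃ x : V × V → ℝ,
        IsCirculation A q x ∧ s = ∑ a ∈ A, x a} := by
  obtain ⟨x, hx⟩ := exists_isMaxCirculation hq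
  obtain ⟨y, hy⟩ := hx.exists_sum_mul_max_eq
  have hleast : IsLeast {s : ℝ | ∃ y : V → ℝ, s = ∑ a ∈ A, q a * max (y a.2 - y a.1 + 1) 0}
      (∑ a ∈ A, x a) :=
    ⟨⟨y, hy.symm⟩, by rintro _ ⟨y', rfl⟩; exact hx.1.sum_le_sum_mul_max y'⟩
  have hgreatest : IsGreatest {s : ℝ | ∃ x : V × V → ℝ, IsCirculation A q x ∧ s = ∑ a ∈ A, x a}
      (∑ a ∈ A, x a) :=
    ⟨⟨x, hx.1, rfl⟩, by rintro _ ⟨z, hz, rfl⟩; exact hx.2 z hz⟩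
  rw [hleast.csInf_eq, hgreatest.csSup_eq]
end

section
/- There exist a vote graph and two minimum maximal circulations x' and x'' whose induced partial orders conflict: for some alternatives i, j, there is a directed path from i to j in A(q−x') and a directed path from j to i in A(q−x''). -/
open Finset

/-- A maximal circulation: no circulation dominates it componentwise. -/
def IsMaximalCirculation {V : Type*} [Fintype V] [DecidableEq V]
    (A : Finset (V × V)) (q x : V × V → ℝ) : Prop :=
  IsCirculation A q x ∧
  ∀ x'', IsCirculation A q x'' → (∀ a, x a ≤ x'' a) → x'' = x

/-- A minimum maximal circulation: a maximal circulation of minimum total flow. -/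
def IsMinMaximalCirculation {V : Type*} [Fintype V] [DecidableEq V]
    (A : Finset (V × V)) (q x : V × V → ℝ) : Prop :=
  IsMaximalCirculation A q x ∧
  ∀ y, IsMaximalCirculation A q y → ∑ a ∈ A, x a ≤ ∑ a ∈ A, y a


/-!
Both `x'` and `x''` have acyclic residual graphs, hence are maximal, and each carries total flow 6.
Conversely, a maximal circulation cannot leave a whole cycle unsaturated, since the flow could be
raised along it. By conservation the total flow of a circulation `y` is
`2 (y₁₂ + y₃₄ + y₅₆ + y₇₈)`, and saturating an arc on each of the cycles 5-6-5, 7-8-7 and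
1-2-3-4-1 forces `y₅₆ = y₇₈ = 1` and `y₁₂ + y₃₄ ≥ 1`. So both are minimum maximal circulations,
while 1 → 2 → 3 is a residual path of `x'` and 3 → 4 → 1 one of `x''`.
-/

section Acyclic

variable {V : Type*}

theorem Acyclic.exists_forall_not_rel [Finite V] {r : V → V → Prop} (h : Acyclic r)
    {S : Set V} (hS : S.Nonempty) : ∃ m ∈ S, ∀ s ∈ S, ¬ r m s := by
  have : IsTrans V (fun a b => Relation.TransGen r b a) := ⟨fun _ _ _ hab hbc => hbc.trans hab⟩
  have : Std.Irrefl (fun a b => Relation.TransGen r b a) := ⟨h⟩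
  obtain ⟨m, hm, hmin⟩ :=
    (Finite.wellFounded_of_trans_of_irrefl fun a b => Relation.TransGen r b a).has_min S hS
  exact ⟨m, hm, fun s hs hr => hmin s hs (.single hr)⟩

theorem acyclic_of_strictMono {r : V → V → Prop} (f : V → ℕ) (hf : ∀ i j, r i j → f i < f j) :
    Acyclic r := by
  have hlt : ∀ i j, Relation.TransGen r i j → f i < f j := fun i j h => by
    induction h with
    | single h => exact hf _ _ h
    | tail _ h ih => exact ih.trans (hf _ _ h)
  exact fun i h => (hlt i i h).false

end Acyclic

section UnitFlow

variable {V : Type*} [DecidableEq V] {A : Finset (V × V)}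

def IsBalanced (S : Finset (V × V)) : Prop :=
  ∀ i, #(S.filter (·.1 = i)) = #(S.filter (·.2 = i))

noncomputable def unitFlow (C : Finset (V × V)) : V × V → ℝ :=
  fun a => if a ∈ C then 1 else 0

theorem sum_filter_unitFlow {C : Finset (V × V)} (hC : C ⊆ A) (P : V × V → Prop)
    [DecidablePred P] : ∑ a ∈ A.filter P, unitFlow C a = #(C.filter P) := by
  unfold unitFlow
  rw [sum_boole, filter_filter, Nat.cast_inj]
  congr 1
  ext a
  simp only [mem_filter]
  exact ⟨fun h => ⟨h.2.2, h.2.1⟩, fun h => ⟨hC h.1, h.2, h.1⟩⟩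

theorem sum_unitFlow {C : Finset (V × V)} (hC : C ⊆ A) : ∑ a ∈ A, unitFlow C a = #C := by
  simpa using sum_filter_unitFlow hC (fun _ => True)

end UnitFlow

section Circulation

variable {V : Type*} [Fintype V] [DecidableEq V] {A : Finset (V × V)} {q x y : V × V → ℝ}

instance : DecidablePred (IsBalanced (V := V)) :=
  fun _ => inferInstanceAs (Decidable (∀ _, _ = _))

theorem isCirculation_unitFlow {C : Finset (V × V)} (hC : C ⊆ A) (hbal : IsBalanced C)
    (hq : ∀ a ∈ A, 1 ≤ q a) : IsCirculation A q (unitFlow C) := by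
  refine ⟨fun a ha => ?_, fun a ha => if_neg fun h => ha (hC h), fun i => ?_⟩
  · unfold unitFlow
    split_ifs
    exacts [⟨zero_le_one, hq a ha⟩, ⟨le_rfl, zero_le_one.trans (hq a ha)⟩]
  · rw [sum_filter_unitFlow hC, sum_filter_unitFlow hC, hbal i]

theorem residRel_one_unitFlow_iff {C : Finset (V × V)} {i j : V} :
    residRel A 1 (unitFlow C) i j ↔ (i, j) ∈ A \ C := by
  simp only [residRel, unitFlow, Pi.one_apply, mem_sdiff]
  split_ifs with h <;> simp [h]

theorem IsCirculation.exists_lt_of_lt {z : V × V → ℝ} (hx : IsCirculation A q x)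
    (hz : IsCirculation A q z) (hle : ∀ a, x a ≤ z a) {i j : V} (hij : (i, j) ∈ A)
    (hlt : x (i, j) < z (i, j)) : ∃ k, (j, k) ∈ A ∧ x (j, k) < z (j, k) := by
  have hin : ∑ a ∈ A.filter (·.2 = j), x a < ∑ a ∈ A.filter (·.2 = j), z a :=
    sum_lt_sum (fun a _ => hle a) ⟨(i, j), mem_filter.2 ⟨hij, rfl⟩, hlt⟩
  rw [← hx.2.2 j, ← hz.2.2 j] at hin
  obtain ⟨a, ha, hlt'⟩ := exists_lt_of_sum_lt hin
  obtain ⟨haA, rfl⟩ := mem_filter.1 ha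
  exact ⟨a.2, haA, hlt'⟩

/-- A dominating circulation would exceed `x` on some arc, and then, by conservation, on an
arc leaving its head, and so on: a walk in the residual graph that never stops. -/
theorem IsCirculation.isMaximalCirculation_of_acyclic (hx : IsCirculation A q x)
    (hacyc : Acyclic (residRel A q x)) : IsMaximalCirculation A q x := by
  refine ⟨hx, fun z hz hle => ?_⟩
  by_contra hne
  obtain ⟨a, ha⟩ := Function.ne_iff.1 hne
  have hlt : x a < z a := (hle a).lt_of_ne' ha
  have haA : a ∈ A := by
    by_contra h
    exact ha (by rw [hz.2.1 a h, hx.2.1 a h])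
  obtain ⟨m, ⟨j, hmj, hlt'⟩, hmin⟩ := hacyc.exists_forall_not_rel
    (S := {i | ∃ j, (i, j) ∈ A ∧ x (i, j) < z (i, j)}) ⟨a.1, a.2, haA, hlt⟩
  exact hmin j (hx.exists_lt_of_lt hz hle hmj hlt') ⟨hmj, hlt'.trans_le (hz.1 _ hmj).2⟩

theorem IsMaximalCirculation.exists_eq_of_isBalanced (hy : IsMaximalCirculation A q y)
    {S : Finset (V × V)} (hSA : S ⊆ A) (hS : S.Nonempty) (hbal : IsBalanced S) :
    ∃ a ∈ S, y a = q a := by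
  by_contra! hunsat
  have hlt : ∀ a ∈ S, y a < q a := fun a ha => (hy.1.1 a (hSA ha)).2.lt_of_ne (hunsat a ha)
  set ε := S.inf' hS fun a => q a - y a
  have hε : 0 < ε := (lt_inf'_iff _).2 fun a ha => sub_pos.2 (hlt a ha)
  have hεle : ∀ a ∈ S, ε ≤ q a - y a := fun a ha => inf'_le _ ha
  have hz : IsCirculation A q (fun a => y a + ε * unitFlow S a) := by
    refine ⟨fun a ha => ?_, fun a ha => ?_, fun i => ?_⟩
    · have := hy.1.1 a ha
      simp only [unitFlow]
      split_ifs with haS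
      · exact ⟨by linarith, by linarith [hεle a haS]⟩
      · simpa using this
    · simp [unitFlow, hy.1.2.1 a ha, show a ∉ S from fun h => ha (hSA h)]
    · simp only [sum_add_distrib, ← mul_sum, sum_filter_unitFlow hSA, hy.1.2.2 i, hbal i]
  obtain ⟨a, ha⟩ := hS
  have hle : ∀ b, y b ≤ y b + ε * unitFlow S b := fun b => by
    unfold unitFlow
    split_ifs <;> linarith
  have := congrFun (hy.2 _ hz hle) a
  simp only [unitFlow, if_pos ha] at this
  linarith

end Circulation

/-- The paper's alternative `k` is the vertex `k - 1` here. -/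
def voteArcs : Finset (Fin 8 × Fin 8) :=
  {(0,1), (1,2), (1,4), (2,3), (3,0), (3,6), (4,5), (5,0), (5,4), (6,7), (7,2), (7,6)}

noncomputable def xPrime : Fin 8 × Fin 8 → ℝ :=
  unitFlow {(2,3), (3,6), (6,7), (7,2), (4,5), (5,4)}

noncomputable def xDoublePrime : Fin 8 × Fin 8 → ℝ :=
  unitFlow {(0,1), (1,4), (4,5), (5,0), (6,7), (7,6)}

theorem isMaximalCirculation_xPrime : IsMaximalCirculation voteArcs 1 xPrime := by
  refine (isCirculation_unitFlow (q := 1) (by decide) (by decide) fun _ _ => le_rfl)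
    |>.isMaximalCirculation_of_acyclic (acyclic_of_strictMono ![1, 2, 3, 0, 3, 0, 1, 0] ?_)
  intro i j h
  rw [residRel_one_unitFlow_iff] at h
  revert i j
  decide

theorem isMaximalCirculation_xDoublePrime : IsMaximalCirculation voteArcs 1 xDoublePrime := by
  refine (isCirculation_unitFlow (q := 1) (by decide) (by decide) fun _ _ => le_rfl)
    |>.isMaximalCirculation_of_acyclic (acyclic_of_strictMono ![3, 0, 1, 2, 1, 0, 3, 0] ?_)
  intro i j h
  rw [residRel_one_unitFlow_iff] at h
  revert i j
  decide

theorem six_le_sum_voteArcs_of_isMaximalCirculation {y : Fin 8 × Fin 8 → ℝ}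
    (hy : IsMaximalCirculation voteArcs 1 y) : 6 ≤ ∑ a ∈ voteArcs, y a := by
  have hnonneg : ∀ a ∈ voteArcs, 0 ≤ y a := fun a ha => (hy.1.1 a ha).1
  have h0 := hy.1.2.2 0
  have h1 := hy.1.2.2 1
  have h2 := hy.1.2.2 2
  have h3 := hy.1.2.2 3
  have h5 := hy.1.2.2 5
  have h7 := hy.1.2.2 7
  simp only [Fin.isValue, voteArcs, filter_insert, ↓reduceIte, one_ne_zero, Fin.reduceEq,
    filter_singleton, insert_empty_eq, sum_singleton, mem_singleton, Prod.mk.injEq, and_true,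
    not_false_eq_true, sum_insert, zero_ne_one, and_false] at h0 h1 h2 h3 h5 h7
  have h45 : 1 ≤ y (4,5) := by
    obtain ⟨a, ha, hsat⟩ := hy.exists_eq_of_isBalanced (S := {(4,5), (5,4)})
      (by decide) (by simp) (by decide)
    simp only [mem_insert, mem_singleton] at ha
    rcases ha with rfl | rfl <;> simp only [Pi.one_apply] at hsat <;>
      linarith [hnonneg (5,0) (by decide)]
  have h67 : 1 ≤ y (6,7) := by
    obtain ⟨a, ha, hsat⟩ := hy.exists_eq_of_isBalanced (S := {(6,7), (7,6)})
      (by decide) (by simp) (by decide)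
    simp only [mem_insert, mem_singleton] at ha
    rcases ha with rfl | rfl <;> simp only [Pi.one_apply] at hsat <;>
      linarith [hnonneg (7,2) (by decide)]
  have h0123 : 1 ≤ y (0,1) + y (2,3) := by
    obtain ⟨a, ha, hsat⟩ := hy.exists_eq_of_isBalanced (S := {(0,1), (1,2), (2,3), (3,0)})
      (by decide) (by simp) (by decide)
    simp only [mem_insert, mem_singleton] at ha
    rcases ha with rfl | rfl | rfl | rfl <;> simp only [Pi.one_apply] at hsat <;>
      linarith [hnonneg (0,1) (by decide), hnonneg (2,3) (by decide),
        hnonneg (5,0) (by decide), hnonneg (7,2) (by decide)]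
  simp only [voteArcs, Fin.isValue, mem_insert, Prod.mk.injEq, zero_ne_one, Fin.reduceEq,
    and_self, one_ne_zero, mem_singleton, or_self, not_false_eq_true, sum_insert, and_false,
    and_true, sum_singleton]
  linarith

theorem isMinMaximalCirculation_of_sum_eq_six {x : Fin 8 × Fin 8 → ℝ}
    (hx : IsMaximalCirculation voteArcs 1 x) (hsum : ∑ a ∈ voteArcs, x a = 6) :
    IsMinMaximalCirculation voteArcs 1 x :=
  ⟨hx, fun _ hy => hsum ▸ six_le_sum_voteArcs_of_isMaximalCirculation hy⟩

/-- there is a vote graph with two minimum maximal circulations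
inducing conflicting partial orders. -/
theorem min_maximal_circulations_can_conflict :
    ∃ (A : Finset (Fin 8 × Fin 8)) (q x' x'' : Fin 8 × Fin 8 → ℝ),
      (∀ a ∈ A, 0 < q a) ∧
      IsMinMaximalCirculation A q x' ∧ IsMinMaximalCirculation A q x'' ∧
      ∃ i j : Fin 8, Relation.TransGen (residRel A q x') i j ∧
                     Relation.TransGen (residRel A q x'') j i := by
  refine ⟨voteArcs, 1, xPrime, xDoublePrime, fun _ _ => one_pos,
    isMinMaximalCirculation_of_sum_eq_six isMaximalCirculation_xPrime ?_,
    isMinMaximalCirculation_of_sum_eq_six isMaximalCirculation_xDoublePrime ?_, 0, 2, ?_, ?_⟩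
  · rw [xPrime, sum_unitFlow (by decide)]
    simp
  · rw [xDoublePrime, sum_unitFlow (by decide)]
    simp
  · exact .head (b := 1) (residRel_one_unitFlow_iff.2 (by decide))
      (.single (residRel_one_unitFlow_iff.2 (by decide)))
  · exact .head (b := 3) (residRel_one_unitFlow_iff.2 (by decide))
      (.single (residRel_one_unitFlow_iff.2 (by decide)))
end

section
/- If x' is a feasible circulation, y' satisfies strong complementary slackness with x', and x'' is any maximum circulation, then every arc saturated by x' is saturated by x'': x'_ij = q_ij implies x''_ij = q_ij. -/
open Finset

/-!
Weight each arc by its reduced cost `c a = 1 - y' a.1 + y' a.2`. Potential differences sum to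
zero against any circulation, so `∑ (x'' a - x' a) * c a = ∑ x'' - ∑ x' ≥ 0` by maximality of
`x''`. Strong complementary slackness makes every term nonpositive (where `x' a = q a` we have
`c a > 0` and `x'' a - x' a ≤ 0`), so every term vanishes, and on a saturated arc `c a > 0`
forces `x'' a = x' a`.
-/

theorem Finset.sum_mul_comp_eq_sum_mul_sum_fiber {ι κ R : Type*} [Fintype κ] [DecidableEq κ]
    [CommSemiring R] (s : Finset ι) (g : ι → κ) (x : ι → R) (f : κ → R) :
    ∑ a ∈ s, x a * f (g a) = ∑ j, f j * ∑ a ∈ s with g a = j, x a := by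
  rw [← Finset.sum_fiberwise s g]
  refine Finset.sum_congr rfl fun j _ => ?_
  rw [Finset.mul_sum]
  exact Finset.sum_congr rfl fun a ha => by rw [(Finset.mem_filter.mp ha).2, mul_comm]

theorem sum_mul_potential_sub_eq_zero {V R : Type*} [Fintype V] [DecidableEq V] [CommRing R]
    {A : Finset (V × V)} {x : V × V → R}
    (hbal : ∀ i : V, ∑ a ∈ A.filter (fun a => a.1 = i), x a
      = ∑ a ∈ A.filter (fun a => a.2 = i), x a) (y : V → R) :
    ∑ a ∈ A, x a * (y a.2 - y a.1) = 0 := by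
  simp only [mul_sub, Finset.sum_sub_distrib,
    Finset.sum_mul_comp_eq_sum_mul_sum_fiber A Prod.snd x y,
    Finset.sum_mul_comp_eq_sum_mul_sum_fiber A Prod.fst x y, hbal, sub_self]

section StrongCS

variable {V : Type*} [Fintype V] [DecidableEq V] {A : Finset (V × V)} {q x z : V × V → ℝ}
  {y : V → ℝ}

theorem sum_sub_mul_reducedCost_eq_sum_sub_sum (hx : IsCirculation A q x)
    (hz : IsCirculation A q z) :
    ∑ a ∈ A, (z a - x a) * (1 - y a.1 + y a.2) = ∑ a ∈ A, z a - ∑ a ∈ A, x a := by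
  have hpot : ∑ a ∈ A, (z a * (y a.2 - y a.1) - x a * (y a.2 - y a.1)) = 0 := by
    rw [Finset.sum_sub_distrib, sum_mul_potential_sub_eq_zero hx.2.2,
      sum_mul_potential_sub_eq_zero hz.2.2, sub_zero]
  calc ∑ a ∈ A, (z a - x a) * (1 - y a.1 + y a.2)
      = ∑ a ∈ A, ((z a - x a) + (z a * (y a.2 - y a.1) - x a * (y a.2 - y a.1))) :=
        Finset.sum_congr rfl fun a _ => by ring
    _ = ∑ a ∈ A, z a - ∑ a ∈ A, x a := by
        rw [Finset.sum_add_distrib, hpot, add_zero, Finset.sum_sub_distrib]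

theorem StrongCS.sub_mul_reducedCost_nonpos (hcs : StrongCS A q x y)
    (hx : IsCirculation A q x) {a : V × V} (ha : a ∈ A) (hz0 : 0 ≤ z a) (hzq : z a ≤ q a) :
    (z a - x a) * (1 - y a.1 + y a.2) ≤ 0 := by
  obtain ⟨hcs_zero, hcs_mid, hcs_sat⟩ := hcs a ha
  obtain ⟨hx0, hxq⟩ := hx.1 a ha
  rcases hx0.eq_or_lt with hx0 | hx0
  · exact mul_nonpos_of_nonneg_of_nonpos (by linarith) (hcs_zero hx0.symm)
  rcases hxq.lt_or_eq with hxq | hxq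
  · rw [hcs_mid hx0 hxq, mul_zero]
  · exact mul_nonpos_of_nonpos_of_nonneg (by linarith) (hcs_sat hxq).le

theorem StrongCS.sub_mul_reducedCost_eq_zero_of_isMaxCirculation (hcs : StrongCS A q x y)
    (hx : IsCirculation A q x) (hz : IsMaxCirculation A q z) :
    ∀ a ∈ A, (z a - x a) * (1 - y a.1 + y a.2) = 0 := by
  have hterm : ∀ a ∈ A, (z a - x a) * (1 - y a.1 + y a.2) ≤ 0 := fun a ha =>
    hcs.sub_mul_reducedCost_nonpos hx ha (hz.1.1 a ha).1 (hz.1.1 a ha).2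
  have hsum : 0 ≤ ∑ a ∈ A, (z a - x a) * (1 - y a.1 + y a.2) := by
    rw [sum_sub_mul_reducedCost_eq_sum_sub_sum hx hz.1, sub_nonneg]
    exact hz.2 x hx
  exact (Finset.sum_eq_zero_iff_of_nonpos hterm).mp
    (le_antisymm (Finset.sum_nonpos hterm) hsum)

end StrongCS

theorem saturated_arcs_saturated_in_every_max_general
    {V : Type*} [Fintype V] [DecidableEq V]
    (A : Finset (V × V)) (q : V × V → ℝ)
    (x' x'' : V × V → ℝ) (y' : V → ℝ)
    (hx' : IsCirculation A q x') (hcs : StrongCS A q x' y')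
    (hx'' : IsMaxCirculation A q x'') :
    ∀ a ∈ A, x' a = q a → x'' a = q a := by
  intro a ha hsat
  have hterm := hcs.sub_mul_reducedCost_eq_zero_of_isMaxCirculation hx' hx'' a ha
  have hcost : 1 - y' a.1 + y' a.2 ≠ 0 := ((hcs a ha).2.2 hsat).ne'
  rw [← hsat]
  exact sub_eq_zero.mp ((mul_eq_zero.mp hterm).resolve_right hcost)

/-- if `(x', y')` satisfies strong complementary slackness, then
every arc saturated by `x'` is saturated by every maximum circulation. -/
theorem saturated_arcs_saturated_in_every_max
    {V : Type*} [Fintype V] [DecidableEq V]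
    (A : Finset (V × V)) (q : V × V → ℝ)
    (hqpos : ∀ a ∈ A, 0 < q a) (x' x'' : V × V → ℝ) (y' : V → ℝ)
    (hx' : IsCirculation A q x') (hcs : StrongCS A q x' y')
    (hx'' : IsMaxCirculation A q x'') :
    ∀ a ∈ A, x' a = q a → x'' a = q a :=
  saturated_arcs_saturated_in_every_max_general A q x' x'' y' hx' hcs hx''
end

section
/- The union over all maximum circulations x' of the residual arc sets A(q−x') equals the residual arc set of any single strong maximum circulation; consequently the transitive closure (strong partial order) induced by a strong maximum circulation is unique, independent of which strong maximum circulation is removed. -/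
open Finset

/-
Maximum circulations form a convex set, and the average of two of them leaves unsaturated
exactly the arcs left unsaturated by either one. A strong maximum circulation `x` therefore
already leaves unsaturated every arc that any maximum circulation `y` does: otherwise the
average of `x` and `y` would have strictly more unsaturated arcs. So all strong maximum
circulations have the same residual arc set, namely the union over all maximum circulations.
-/

section

variable {V : Type*} [Fintype V] [DecidableEq V] {A : Finset (V × V)} {q x y : V × V → ℝ}

theorem IsCirculation.avg (hx : IsCirculation A q x) (hy : IsCirculation A q y) :
    IsCirculation A q (fun a => (x a + y a) / 2) := by
  obtain ⟨hxb, hx0, hxbal⟩ := hx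
  obtain ⟨hyb, hy0, hybal⟩ := hy
  refine ⟨fun a ha => ?_, fun a ha => by simp [hx0 a ha, hy0 a ha], fun i => ?_⟩
  · have := hxb a ha; have := hyb a ha
    constructor <;> linarith
  · simp only [← Finset.sum_div, Finset.sum_add_distrib, hxbal i, hybal i]

theorem IsMaxCirculation.sum_eq (hx : IsMaxCirculation A q x) (hy : IsMaxCirculation A q y) :
    ∑ a ∈ A, x a = ∑ a ∈ A, y a :=
  le_antisymm (hy.2 x hx.1) (hx.2 y hy.1)

theorem IsMaxCirculation.avg (hx : IsMaxCirculation A q x) (hy : IsMaxCirculation A q y) :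
    IsMaxCirculation A q (fun a => (x a + y a) / 2) := by
  refine ⟨hx.1.avg hy.1, fun z hz => ?_⟩
  calc ∑ a ∈ A, z a ≤ ∑ a ∈ A, x a := hx.2 z hz
    _ = ∑ a ∈ A, (x a + y a) / 2 := by
      rw [← Finset.sum_div, Finset.sum_add_distrib, ← hx.sum_eq hy]; ring

theorem unsat_avg (hx : IsCirculation A q x) (hy : IsCirculation A q y) :
    unsat A q (fun a => (x a + y a) / 2) = unsat A q x ∪ unsat A q y := by
  ext a
  simp only [unsat, Finset.mem_union, Finset.mem_filter, ← and_or_left]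
  refine and_congr_right fun ha => ?_
  have := (hx.1 a ha).2; have := (hy.1 a ha).2
  constructor
  · intro h; by_contra! h'; linarith
  · rintro (h | h) <;> linarith

theorem IsStrongMaxCirculation.unsat_subset (hx : IsStrongMaxCirculation A q x)
    (hy : IsMaxCirculation A q y) : unsat A q y ⊆ unsat A q x := by
  have hcard : (unsat A q x ∪ unsat A q y).card ≤ (unsat A q x).card := by
    rw [← unsat_avg hx.1.1 hy.1]
    exact hx.2 _ (hx.1.avg hy)
  exact Finset.union_eq_left.mp
    (Finset.eq_of_subset_of_card_le Finset.subset_union_left hcard).symm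

theorem IsStrongMaxCirculation.coe_unsat_eq (hx : IsStrongMaxCirculation A q x) :
    (↑(unsat A q x) : Set (V × V)) = {a | a ∈ A ∧ ∃ y, IsMaxCirculation A q y ∧ y a < q a} := by
  ext a
  simp only [Finset.coe_filter, unsat, Set.mem_ofPred_eq]
  constructor
  · rintro ⟨ha, hlt⟩
    exact ⟨ha, x, hx.1, hlt⟩
  · rintro ⟨ha, y, hy, hlt⟩
    exact Finset.mem_filter.mp (hx.unsat_subset hy (Finset.mem_filter.mpr ⟨ha, hlt⟩))

theorem IsStrongMaxCirculation.unsat_eq (hx : IsStrongMaxCirculation A q x)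
    (hy : IsStrongMaxCirculation A q y) : unsat A q x = unsat A q y :=
  (hy.unsat_subset hx.1).antisymm (hx.unsat_subset hy.1)

theorem residRel_iff_mem_unsat {i j : V} : residRel A q x i j ↔ (i, j) ∈ unsat A q x := by
  rw [unsat, Finset.mem_filter, residRel]

end

theorem strong_partial_order_unique_general
    {V : Type*} [Fintype V] [DecidableEq V]
    (A : Finset (V × V)) (q : V × V → ℝ)
    (x : V × V → ℝ)
    (hx : IsStrongMaxCirculation A q x) :
    (↑(unsat A q x) : Set (V × V))
      = {a | a ∈ A ∧ ∃ y, IsMaxCirculation A q y ∧ y a < q a} ∧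
    ∀ x', IsStrongMaxCirculation A q x' →
      ∀ i j : V, Relation.TransGen (residRel A q x) i j ↔
                 Relation.TransGen (residRel A q x') i j := by
  refine ⟨hx.coe_unsat_eq, fun x' hx' i j => ?_⟩
  have hrel : residRel A q x = residRel A q x' := by
    ext k l
    rw [residRel_iff_mem_unsat, residRel_iff_mem_unsat, hx.unsat_eq hx']
  rw [hrel]

/-- the union over all maximum circulations of the residual arc
sets equals the residual arc set of any strong maximum circulation, and hence
the induced strong partial order (transitive closure) is unique. -/
theorem strong_partial_order_unique
    {V : Type*} [Fintype V] [DecidableEq V]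
    (A : Finset (V × V)) (q : V × V → ℝ)
    (hqpos : ∀ a ∈ A, 0 < q a) (x : V × V → ℝ)
    (hx : IsStrongMaxCirculation A q x) :
    (↑(unsat A q x) : Set (V × V))
      = {a | a ∈ A ∧ ∃ y, IsMaxCirculation A q y ∧ y a < q a} ∧
    ∀ x', IsStrongMaxCirculation A q x' →
      ∀ i j : V, Relation.TransGen (residRel A q x) i j ↔
                 Relation.TransGen (residRel A q x') i j :=
  strong_partial_order_unique_general A q x hx
end
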